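/- arXiv:1610.00260 — 2 statements merged into one kernel-verified Lean document; each statement's English description precedes it below -/
import Mathlib

section
/- Let $k \ge 3$ and let $I_{2k+1} \subset K[y_1,\dots,y_{2k+1}]$ be the ideal generated by: $y_i y_{i+1}$ for $1 \le i \le 2k$; $y_1 y_{2k+1}$; $y_i^2 - y_{i-1}y_{i+2}$ for $2 \le i \le 2k-1$; $y_1^2 - y_3 y_{2k+1}$; $y_{2k}^2 - y_1 y_{2k-1}$; and $y_{2k+1}^2 - y_2 y_{2k}$. Then for $k \ge 4$, the image of $y_{2k+1}^2 \cdot \prod_{i=1}^{k-1} y_{2i}$ in $R = K[y_1,\dots,y_{2k+1}]/I_{2k+1}$ is annihilated by every variable $y_j$, $1 \le j \le 2k+1$, i.e., $y_j \cdot y_{2k+1}^2 \prod_{i=1}^{k-1} y_{2i} \in I_{2k+1}$ for all $j$. -/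
open MvPolynomial

/-- The variable `y_m` of `K[y₁,…,y_{2k+1}]`, where a natural number `i` denotes the
variable `y_{i+1}` of the paper (indices taken mod `2k+1`). -/
noncomputable def vX (k : ℕ) (K : Type*) [Field K] (i : ℕ) : MvPolynomial (Fin (2 * k + 1)) K :=
  X ⟨i % (2 * k + 1), Nat.mod_lt _ (by omega)⟩

/-- Generators of the ideal `I_{2k+1}` (written 0-based: the paper's `y_m` is `vX (m-1)`):
`y_i y_{i+1}` for `1 ≤ i ≤ 2k`; `y_1 y_{2k+1}`; `y_i² - y_{i-1} y_{i+2}` for `2 ≤ i ≤ 2k-1`;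
`y_1² - y_3 y_{2k+1}`; `y_{2k}² - y_1 y_{2k-1}`; `y_{2k+1}² - y_2 y_{2k}`. -/
def Igens (k : ℕ) (K : Type*) [Field K] : Set (MvPolynomial (Fin (2 * k + 1)) K) :=
  {p | (∃ i, i < 2 * k ∧ p = vX k K i * vX k K (i + 1))
    ∨ p = vX k K 0 * vX k K (2 * k)
    ∨ (∃ i, 1 ≤ i ∧ i ≤ 2 * k - 2 ∧ p = vX k K i ^ 2 - vX k K (i - 1) * vX k K (i + 2))
    ∨ p = vX k K 0 ^ 2 - vX k K 2 * vX k K (2 * k)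
    ∨ p = vX k K (2 * k - 1) ^ 2 - vX k K 0 * vX k K (2 * k - 2)
    ∨ p = vX k K (2 * k) ^ 2 - vX k K 1 * vX k K (2 * k - 1)}

lemma vX_eq (k : ℕ) (K : Type*) [Field K] (i : ℕ) (h : i < 2 * k + 1) :
    vX k K i = X ⟨i, h⟩ := by
  unfold vX
  congr 1
  exact Fin.ext (Nat.mod_eq_of_lt h)

lemma mem_of_eq_mul {R : Type*} [CommRing R] {S : Set R} {p g q : R}
    (hg : g ∈ S) (h : p = q * g) : p ∈ Ideal.span S :=
  h ▸ Ideal.mul_mem_left _ q (Ideal.subset_span hg)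

lemma mem_of_eq_mul_add {R : Type*} [CommRing R] {S : Set R} {p g₁ g₂ q₁ q₂ : R}
    (hg₁ : g₁ ∈ S) (hg₂ : g₂ ∈ S) (h : p = q₁ * g₁ + q₂ * g₂) : p ∈ Ideal.span S :=
  h ▸ Ideal.add_mem _ (Ideal.mul_mem_left _ q₁ (Ideal.subset_span hg₁))
    (Ideal.mul_mem_left _ q₂ (Ideal.subset_span hg₂))

lemma extract1 {k : ℕ} {K : Type*} [Field K] {i0 : ℕ} (h : i0 ∈ Finset.Icc 1 (k - 1)) :
    ∏ i ∈ Finset.Icc 1 (k - 1), vX k K (2 * i - 1)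
      = vX k K (2 * i0 - 1) * ∏ i ∈ (Finset.Icc 1 (k - 1)).erase i0, vX k K (2 * i - 1) :=
  (Finset.mul_prod_erase _ _ h).symm

lemma extract2 {k : ℕ} {K : Type*} [Field K] {i0 i1 : ℕ} (h0 : i0 ∈ Finset.Icc 1 (k - 1))
    (h1 : i1 ∈ Finset.Icc 1 (k - 1)) (hne : i1 ≠ i0) :
    ∏ i ∈ Finset.Icc 1 (k - 1), vX k K (2 * i - 1)
      = vX k K (2 * i0 - 1) * (vX k K (2 * i1 - 1) *
          ∏ i ∈ ((Finset.Icc 1 (k - 1)).erase i0).erase i1, vX k K (2 * i - 1)) := by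
  rw [extract1 h0, ← Finset.mul_prod_erase _ _ (Finset.mem_erase.mpr ⟨hne, h1⟩)]

/-- For `k ≥ 4`, the image of `y_{2k+1}² ∏_{i=1}^{k-1} y_{2i}` in
`K[y₁,…,y_{2k+1}]/I_{2k+1}` is annihilated by every variable `y_j`. -/
theorem stmt9 (k : ℕ) (hk3 : 3 ≤ k) (K : Type*) [Field K] (hk : 4 ≤ k)
    (j : Fin (2 * k + 1)) :
    X j * (vX k K (2 * k) ^ 2 * ∏ i ∈ Finset.Icc 1 (k - 1), vX k K (2 * i - 1))
      ∈ Ideal.span (Igens k K) := by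
  obtain ⟨m, hm⟩ := j
  rw [← vX_eq k K m hm]
  set P := ∏ i ∈ Finset.Icc 1 (k - 1), vX k K (2 * i - 1) with hP
  by_cases h0 : m = 0
  · subst h0
    refine mem_of_eq_mul (g := vX k K 0 * vX k K (2 * k)) (q := vX k K (2 * k) * P)
      (Or.inr (Or.inl rfl)) ?_
    ring
  by_cases h2k : m = 2 * k
  · subst h2k
    refine mem_of_eq_mul_add
      (g₁ := vX k K (2 * k) ^ 2 - vX k K 1 * vX k K (2 * k - 1))
      (g₂ := vX k K (2 * k - 1) * vX k K (2 * k - 1 + 1))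
      (q₁ := vX k K (2 * k) * P)
      (q₂ := vX k K 1 * P)
      (Or.inr (Or.inr (Or.inr (Or.inr (Or.inr rfl)))))
      (Or.inl ⟨2 * k - 1, by omega, rfl⟩) ?_
    rw [show 2 * k - 1 + 1 = 2 * k by omega]
    ring
  by_cases h2k1 : m = 2 * k - 1
  · subst h2k1
    refine mem_of_eq_mul (g := vX k K (2 * k - 1) * vX k K (2 * k - 1 + 1))
      (q := vX k K (2 * k) * P) (Or.inl ⟨2 * k - 1, by omega, rfl⟩) ?_
    rw [show 2 * k - 1 + 1 = 2 * k by omega]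
    ring
  by_cases hev : m % 2 = 0
  · -- m even, 2 ≤ m ≤ 2k - 2 : adjacency x_{m-1} x_m, with x_{m-1} in the product
    have hmem : m / 2 ∈ Finset.Icc 1 (k - 1) := Finset.mem_Icc.mpr ⟨by omega, by omega⟩
    rw [hP, extract1 hmem, show 2 * (m / 2) - 1 = m - 1 by omega]
    refine mem_of_eq_mul (g := vX k K (m - 1) * vX k K (m - 1 + 1))
      (q := vX k K (2 * k) ^ 2 * ∏ i ∈ (Finset.Icc 1 (k - 1)).erase (m / 2), vX k K (2 * i - 1))
      (Or.inl ⟨m - 1, by omega, rfl⟩) ?_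
    rw [show m - 1 + 1 = m by omega]
    ring
  by_cases h1 : m = 1
  · subst h1
    have hmem : 1 ∈ Finset.Icc 1 (k - 1) := Finset.mem_Icc.mpr ⟨le_refl _, by omega⟩
    rw [hP, extract1 hmem]
    norm_num
    refine mem_of_eq_mul_add
      (g₁ := vX k K 1 ^ 2 - vX k K (1 - 1) * vX k K (1 + 2))
      (g₂ := vX k K 0 * vX k K (2 * k))
      (q₁ := vX k K (2 * k) ^ 2 * ∏ i ∈ (Finset.Icc 1 (k - 1)).erase 1, vX k K (2 * i - 1))
      (q₂ := vX k K 3 * vX k K (2 * k) * ∏ i ∈ (Finset.Icc 1 (k - 1)).erase 1, vX k K (2 * i - 1))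
      (Or.inr (Or.inr (Or.inl ⟨1, le_refl _, by omega, rfl⟩)))
      (Or.inr (Or.inl rfl)) ?_
    norm_num
    ring
  · -- m odd, 3 ≤ m ≤ 2k - 3
    have hodd : m % 2 = 1 := by omega
    have hm3 : 3 ≤ m := by omega
    have hmub : m ≤ 2 * k - 3 := by omega
    have hmem0 : (m + 1) / 2 ∈ Finset.Icc 1 (k - 1) := Finset.mem_Icc.mpr ⟨by omega, by omega⟩
    have hmem1 : (m - 1) / 2 ∈ Finset.Icc 1 (k - 1) := Finset.mem_Icc.mpr ⟨by omega, by omega⟩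
    rw [hP, extract2 hmem0 hmem1 (by omega),
      show 2 * ((m + 1) / 2) - 1 = m by omega, show 2 * ((m - 1) / 2) - 1 = m - 2 by omega]
    set Q := ∏ i ∈ ((Finset.Icc 1 (k - 1)).erase ((m + 1) / 2)).erase ((m - 1) / 2),
      vX k K (2 * i - 1) with hQ
    refine mem_of_eq_mul_add
      (g₁ := vX k K m ^ 2 - vX k K (m - 1) * vX k K (m + 2))
      (g₂ := vX k K (m - 2) * vX k K (m - 2 + 1))
      (q₁ := vX k K (2 * k) ^ 2 * vX k K (m - 2) * Q)
      (q₂ := vX k K (m + 2) * vX k K (2 * k) ^ 2 * Q)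
      (Or.inr (Or.inr (Or.inl ⟨m, by omega, by omega, rfl⟩)))
      (Or.inl ⟨m - 2, by omega, rfl⟩) ?_
    rw [show m - 2 + 1 = m - 1 by omega]
    ring
end

section
/- Let $I_7 \subset K[y_1,\dots,y_7]$ be generated by $y_iy_{i+1}$ ($1\le i\le 6$), $y_1y_7$, $y_i^2 - y_{i-1}y_{i+2}$ ($2\le i\le 5$), $y_1^2 - y_3y_7$, $y_6^2 - y_1y_5$, $y_7^2 - y_2y_6$. With respect to the reverse lexicographic order with $y_1 < y_2 < \cdots < y_7$, the initial monomials $y_1y_2, y_2y_3, y_3y_4, y_4y_5, y_5y_6, y_6y_7, y_1y_7, y_2^2, y_3^2, y_4^2, y_5^2, y_6^2, y_7^2$ of the listed generators, together with $y_1^3, y_3y_7, y_1^2y_4, y_1^2y_6, y_2y_5y_7$, all lie in the initial ideal of $I_7$; in particular, $y_1^3, y_3y_7\cdot(\text{unit multiples}), y_1^2y_4, y_1^2y_6, y_2y_5y_7$ arise as initial terms of explicit elements of $I_7$. -/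
open MvPolynomial

/-- Total degree of an exponent vector. -/
def rdeg (a : Fin 7 →₀ ℕ) : ℕ := ∑ i, a i

/-- The (graded) reverse lexicographic order induced by `y₁ < y₂ < ⋯ < y₇`
(variables `0 < 1 < ⋯ < 6`): `a` is smaller than `b` if it has smaller degree, or equal
degree and a larger exponent in the smallest variable where they differ. -/
def rlexLT (a b : Fin 7 →₀ ℕ) : Prop :=
  rdeg a < rdeg b ∨ (rdeg a = rdeg b ∧ ∃ i, b i < a i ∧ ∀ j, j < i → a j = b j)

/-- `m` is the leading (initial) monomial of `f` with respect to the above order. -/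
def IsLeadMonomial {K : Type*} [Field K] (f : MvPolynomial (Fin 7) K) (m : Fin 7 →₀ ℕ) :
    Prop :=
  m ∈ f.support ∧ ∀ m' ∈ f.support, m' ≠ m → rlexLT m' m

/-- The initial ideal of `I`: the ideal generated by the leading monomials of the nonzero
elements of `I`. -/
noncomputable def initialIdeal {K : Type*} [Field K] (I : Ideal (MvPolynomial (Fin 7) K)) :
    Ideal (MvPolynomial (Fin 7) K) :=
  Ideal.span {p | ∃ f ∈ I, f ≠ 0 ∧ ∃ m, IsLeadMonomial f m ∧ p = monomial m 1}

/-- The ideal `I₇` (variables `0,…,6`; the paper's `y_m` is `X (m-1)`). -/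
noncomputable def I7 (K : Type*) [Field K] : Ideal (MvPolynomial (Fin 7) K) :=
  Ideal.span
    {X 0 * X 1, X 1 * X 2, X 2 * X 3, X 3 * X 4, X 4 * X 5, X 5 * X 6, X 0 * X 6,
     X 1 ^ 2 - X 0 * X 3, X 2 ^ 2 - X 1 * X 4, X 3 ^ 2 - X 2 * X 5, X 4 ^ 2 - X 3 * X 6,
     X 0 ^ 2 - X 2 * X 6, X 5 ^ 2 - X 0 * X 4, X 6 ^ 2 - X 1 * X 5}

/-- The exponent vector `y_i y_j` (or `y_i²` when `i = j`). -/
noncomputable def e2 (i j : Fin 7) : Fin 7 →₀ ℕ := Finsupp.single i 1 + Finsupp.single j 1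

-- infra (already tested)
lemma rdeg_add (a b : Fin 7 →₀ ℕ) : rdeg (a + b) = rdeg a + rdeg b := by
  simp [rdeg, Finset.sum_add_distrib]
lemma rdeg_single (i : Fin 7) (n : ℕ) : rdeg (Finsupp.single i n) = n := by
  simp [rdeg, Finsupp.single_apply]
lemma isLead_monomial {K : Type*} [Field K] (m : Fin 7 →₀ ℕ) (c : K) (hc : c ≠ 0) :
    IsLeadMonomial (monomial m c) m := by
  classical
  constructor
  · simp [mem_support_iff, coeff_monomial, hc]
  · intro m' hm' hne
    rw [support_monomial, if_neg hc] at hm'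
    simp at hm'
    exact absurd hm' hne
lemma isLead_binomial {K : Type*} [Field K] {a b : Fin 7 →₀ ℕ} {c d : K} (hc : c ≠ 0)
    (hd : d ≠ 0) (h : rlexLT a b) :
    IsLeadMonomial (monomial a c + monomial b d) b := by
  classical
  have hab : a ≠ b := by
    rintro rfl
    rcases h with h | ⟨-, i, hi, -⟩
    · exact lt_irrefl _ h
    · exact lt_irrefl _ hi
  constructor
  · rw [mem_support_iff]
    simp [coeff_monomial, hab, hd]
  · intro m' hm' hne
    have h2 := MvPolynomial.support_add hm'
    rw [support_monomial, if_neg hc, support_monomial, if_neg hd] at h2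
    simp at h2
    rcases h2 with rfl | rfl
    · exact h
    · exact absurd rfl hne
lemma isLead_ne_zero {K : Type*} [Field K] {f : MvPolynomial (Fin 7) K} {m}
    (h : IsLeadMonomial f m) : f ≠ 0 := by
  rintro rfl; simpa using h.1
lemma mem_init {K : Type*} [Field K] {I : Ideal (MvPolynomial (Fin 7) K)} {f m}
    (hf : f ∈ I) (hl : IsLeadMonomial f m) :
    (monomial m 1 : MvPolynomial (Fin 7) K) ∈ initialIdeal I :=
  Ideal.subset_span ⟨f, hf, isLead_ne_zero hl, m, hl, rfl⟩

-- subtraction shapes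
lemma isLead_sub₁ {K : Type*} [Field K] {a b : Fin 7 →₀ ℕ} (h : rlexLT a b) :
    IsLeadMonomial (monomial b (1 : K) - monomial a 1) b := by
  have e : monomial b (1 : K) - monomial a 1 = monomial a (-1) + monomial b 1 := by
    rw [map_neg]; ring
  rw [e]; exact isLead_binomial (by norm_num) one_ne_zero h
lemma isLead_sub₂ {K : Type*} [Field K] {a b : Fin 7 →₀ ℕ} (h : rlexLT a b) :
    IsLeadMonomial (monomial a (1 : K) - monomial b 1) b := by
  have e : monomial a (1 : K) - monomial b 1 = monomial a 1 + monomial b (-1) := by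
    rw [map_neg]; ring
  rw [e]; exact isLead_binomial one_ne_zero (by norm_num) h

-- monomial forms
lemma xmul {K : Type*} [Field K] (i j : Fin 7) :
    (X i * X j : MvPolynomial (Fin 7) K) = monomial (e2 i j) 1 := by
  simp [e2, X, monomial_mul]
lemma xsq {K : Type*} [Field K] (i : Fin 7) :
    (X i ^ 2 : MvPolynomial (Fin 7) K) = monomial (e2 i i) 1 := by
  rw [X_pow_eq_monomial, e2, ← Finsupp.single_add]

-- rlex facts
lemma L1 : rlexLT (e2 0 3) (e2 1 1) := by
  refine Or.inr ⟨by simp [e2, rdeg_add, rdeg_single], 0, ?_, ?_⟩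
  · simp [e2, Finsupp.single_apply]
  · intro j hj; exact absurd hj (by simp)
lemma L2 : rlexLT (e2 1 4) (e2 2 2) := by
  refine Or.inr ⟨by simp [e2, rdeg_add, rdeg_single], 1, ?_, ?_⟩
  · simp [e2, Finsupp.single_apply]
  · intro j hj; fin_cases j <;> simp_all [e2, Finsupp.single_apply]
lemma L3 : rlexLT (e2 2 5) (e2 3 3) := by
  refine Or.inr ⟨by simp [e2, rdeg_add, rdeg_single], 2, ?_, ?_⟩
  · simp [e2, Finsupp.single_apply]
  · intro j hj; fin_cases j <;> simp_all [e2, Finsupp.single_apply]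
lemma L4 : rlexLT (e2 3 6) (e2 4 4) := by
  refine Or.inr ⟨by simp [e2, rdeg_add, rdeg_single], 3, ?_, ?_⟩
  · simp [e2, Finsupp.single_apply]
  · intro j hj; fin_cases j <;> simp_all [e2, Finsupp.single_apply]
lemma L5 : rlexLT (e2 0 0) (e2 2 6) := by
  refine Or.inr ⟨by simp [e2, rdeg_add, rdeg_single], 0, ?_, ?_⟩
  · simp [e2, Finsupp.single_apply]
  · intro j hj; exact absurd hj (by simp)
lemma L6 : rlexLT (e2 0 4) (e2 5 5) := by
  refine Or.inr ⟨by simp [e2, rdeg_add, rdeg_single], 0, ?_, ?_⟩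
  · simp [e2, Finsupp.single_apply]
  · intro j hj; exact absurd hj (by simp)
lemma L7 : rlexLT (e2 1 5) (e2 6 6) := by
  refine Or.inr ⟨by simp [e2, rdeg_add, rdeg_single], 1, ?_, ?_⟩
  · simp [e2, Finsupp.single_apply]
  · intro j hj; fin_cases j <;> simp_all [e2, Finsupp.single_apply]
lemma L8 : rlexLT (Finsupp.single 0 2 + Finsupp.single 2 1)
    (Finsupp.single 1 1 + Finsupp.single 4 1 + Finsupp.single 6 1) := by
  refine Or.inr ⟨by simp [rdeg_add, rdeg_single], 0, ?_, ?_⟩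
  · simp [Finsupp.single_apply]
  · intro j hj; exact absurd hj (by simp)

/-- The 18 claimed generators of `in_{<rev}(I₇)`: the leading monomials of the listed
generators of `I₇` together with `y₁³, y₃y₇, y₁²y₄, y₁²y₆, y₂y₅y₇`, all of which lie in
the initial ideal; moreover the last five actually arise as leading monomials of explicit
elements of `I₇`. -/
theorem stmt13 (K : Type*) [Field K] :
    (∀ m ∈ ({e2 0 1, e2 1 2, e2 2 3, e2 3 4, e2 4 5, e2 5 6, e2 0 6,
             e2 1 1, e2 2 2, e2 3 3, e2 4 4, e2 5 5, e2 6 6,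
             Finsupp.single 0 3, e2 2 6,
             Finsupp.single 0 2 + Finsupp.single 3 1,
             Finsupp.single 0 2 + Finsupp.single 5 1,
             Finsupp.single 1 1 + Finsupp.single 4 1 + Finsupp.single 6 1} :
              Set (Fin 7 →₀ ℕ)),
        (monomial m 1 : MvPolynomial (Fin 7) K) ∈ initialIdeal (I7 K)) ∧
    (∀ m ∈ ({Finsupp.single 0 3, e2 2 6,
             Finsupp.single 0 2 + Finsupp.single 3 1,
             Finsupp.single 0 2 + Finsupp.single 5 1,
             Finsupp.single 1 1 + Finsupp.single 4 1 + Finsupp.single 6 1} :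
              Set (Fin 7 →₀ ℕ)),
        ∃ f ∈ I7 K, f ≠ 0 ∧ IsLeadMonomial f m) := by
  -- generator memberships
  have hg : ∀ g ∈ ({X 0 * X 1, X 1 * X 2, X 2 * X 3, X 3 * X 4, X 4 * X 5, X 5 * X 6,
      X 0 * X 6, X 1 ^ 2 - X 0 * X 3, X 2 ^ 2 - X 1 * X 4, X 3 ^ 2 - X 2 * X 5,
      X 4 ^ 2 - X 3 * X 6, X 0 ^ 2 - X 2 * X 6, X 5 ^ 2 - X 0 * X 4,
      X 6 ^ 2 - X 1 * X 5} : Set (MvPolynomial (Fin 7) K)), g ∈ I7 K := by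
    intro g hgm; exact Ideal.subset_span hgm
  have h1 : (X 0 * X 1 : MvPolynomial (Fin 7) K) ∈ I7 K := hg _ (Or.inl rfl)
  have h2 : (X 1 * X 2 : MvPolynomial (Fin 7) K) ∈ I7 K := hg _ (Or.inr (Or.inl rfl))
  have h3 : (X 2 * X 3 : MvPolynomial (Fin 7) K) ∈ I7 K := hg _ (Or.inr (Or.inr (Or.inl rfl)))
  have h4 : (X 3 * X 4 : MvPolynomial (Fin 7) K) ∈ I7 K := hg _ (Or.inr (Or.inr (Or.inr (Or.inl rfl))))
  have h5 : (X 4 * X 5 : MvPolynomial (Fin 7) K) ∈ I7 K := hg _ (Or.inr (Or.inr (Or.inr (Or.inr (Or.inl rfl)))))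
  have h6 : (X 5 * X 6 : MvPolynomial (Fin 7) K) ∈ I7 K := hg _ (Or.inr (Or.inr (Or.inr (Or.inr (Or.inr (Or.inl rfl))))))
  have h7 : (X 0 * X 6 : MvPolynomial (Fin 7) K) ∈ I7 K := hg _ (Or.inr (Or.inr (Or.inr (Or.inr (Or.inr (Or.inr (Or.inl rfl)))))))
  have h8 : (X 1 ^ 2 - X 0 * X 3 : MvPolynomial (Fin 7) K) ∈ I7 K := hg _ (Or.inr (Or.inr (Or.inr (Or.inr (Or.inr (Or.inr (Or.inr (Or.inl rfl))))))))
  have h9 : (X 2 ^ 2 - X 1 * X 4 : MvPolynomial (Fin 7) K) ∈ I7 K := hg _ (Or.inr (Or.inr (Or.inr (Or.inr (Or.inr (Or.inr (Or.inr (Or.inr (Or.inl rfl)))))))))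
  have h10 : (X 3 ^ 2 - X 2 * X 5 : MvPolynomial (Fin 7) K) ∈ I7 K := hg _ (Or.inr (Or.inr (Or.inr (Or.inr (Or.inr (Or.inr (Or.inr (Or.inr (Or.inr (Or.inl rfl))))))))))
  have h11 : (X 4 ^ 2 - X 3 * X 6 : MvPolynomial (Fin 7) K) ∈ I7 K := hg _ (Or.inr (Or.inr (Or.inr (Or.inr (Or.inr (Or.inr (Or.inr (Or.inr (Or.inr (Or.inr (Or.inl rfl)))))))))))
  have h12 : (X 0 ^ 2 - X 2 * X 6 : MvPolynomial (Fin 7) K) ∈ I7 K := hg _ (Or.inr (Or.inr (Or.inr (Or.inr (Or.inr (Or.inr (Or.inr (Or.inr (Or.inr (Or.inr (Or.inr (Or.inl rfl))))))))))))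
  have h13 : (X 5 ^ 2 - X 0 * X 4 : MvPolynomial (Fin 7) K) ∈ I7 K := hg _ (Or.inr (Or.inr (Or.inr (Or.inr (Or.inr (Or.inr (Or.inr (Or.inr (Or.inr (Or.inr (Or.inr (Or.inr (Or.inl rfl)))))))))))))
  have h14 : (X 6 ^ 2 - X 1 * X 5 : MvPolynomial (Fin 7) K) ∈ I7 K := hg _ (Or.inr (Or.inr (Or.inr (Or.inr (Or.inr (Or.inr (Or.inr (Or.inr (Or.inr (Or.inr (Or.inr (Or.inr (Or.inr (rfl))))))))))))))
  -- leads of generators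
  have l1 : IsLeadMonomial (X 0 * X 1 : MvPolynomial (Fin 7) K) (e2 0 1) := by
    rw [xmul]; exact isLead_monomial _ 1 one_ne_zero
  have l2 : IsLeadMonomial (X 1 * X 2 : MvPolynomial (Fin 7) K) (e2 1 2) := by
    rw [xmul]; exact isLead_monomial _ 1 one_ne_zero
  have l3 : IsLeadMonomial (X 2 * X 3 : MvPolynomial (Fin 7) K) (e2 2 3) := by
    rw [xmul]; exact isLead_monomial _ 1 one_ne_zero
  have l4 : IsLeadMonomial (X 3 * X 4 : MvPolynomial (Fin 7) K) (e2 3 4) := by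
    rw [xmul]; exact isLead_monomial _ 1 one_ne_zero
  have l5 : IsLeadMonomial (X 4 * X 5 : MvPolynomial (Fin 7) K) (e2 4 5) := by
    rw [xmul]; exact isLead_monomial _ 1 one_ne_zero
  have l6 : IsLeadMonomial (X 5 * X 6 : MvPolynomial (Fin 7) K) (e2 5 6) := by
    rw [xmul]; exact isLead_monomial _ 1 one_ne_zero
  have l7 : IsLeadMonomial (X 0 * X 6 : MvPolynomial (Fin 7) K) (e2 0 6) := by
    rw [xmul]; exact isLead_monomial _ 1 one_ne_zero
  have l8 : IsLeadMonomial (X 1 ^ 2 - X 0 * X 3 : MvPolynomial (Fin 7) K) (e2 1 1) := by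
    rw [xsq, xmul]; exact isLead_sub₁ L1
  have l9 : IsLeadMonomial (X 2 ^ 2 - X 1 * X 4 : MvPolynomial (Fin 7) K) (e2 2 2) := by
    rw [xsq, xmul]; exact isLead_sub₁ L2
  have l10 : IsLeadMonomial (X 3 ^ 2 - X 2 * X 5 : MvPolynomial (Fin 7) K) (e2 3 3) := by
    rw [xsq, xmul]; exact isLead_sub₁ L3
  have l11 : IsLeadMonomial (X 4 ^ 2 - X 3 * X 6 : MvPolynomial (Fin 7) K) (e2 4 4) := by
    rw [xsq, xmul]; exact isLead_sub₁ L4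
  have l12 : IsLeadMonomial (X 0 ^ 2 - X 2 * X 6 : MvPolynomial (Fin 7) K) (e2 2 6) := by
    rw [xsq, xmul]; exact isLead_sub₂ L5
  have l13 : IsLeadMonomial (X 5 ^ 2 - X 0 * X 4 : MvPolynomial (Fin 7) K) (e2 5 5) := by
    rw [xsq, xmul]; exact isLead_sub₁ L6
  have l14 : IsLeadMonomial (X 6 ^ 2 - X 1 * X 5 : MvPolynomial (Fin 7) K) (e2 6 6) := by
    rw [xsq, xmul]; exact isLead_sub₁ L7
  -- the five extra elements
  have m14 : (X 0 ^ 3 : MvPolynomial (Fin 7) K) ∈ I7 K := by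
    have e : (X 0 ^ 3 : MvPolynomial (Fin 7) K)
        = X 0 * (X 0 ^ 2 - X 2 * X 6) + X 2 * (X 0 * X 6) := by ring
    rw [e]; exact add_mem (Ideal.mul_mem_left _ _ h12) (Ideal.mul_mem_left _ _ h7)
  have l14' : IsLeadMonomial (X 0 ^ 3 : MvPolynomial (Fin 7) K) (Finsupp.single 0 3) := by
    rw [X_pow_eq_monomial]; exact isLead_monomial _ 1 one_ne_zero
  have m16 : (X 0 ^ 2 * X 3 : MvPolynomial (Fin 7) K) ∈ I7 K := by
    have e : (X 0 ^ 2 * X 3 : MvPolynomial (Fin 7) K)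
        = X 3 * (X 0 ^ 2 - X 2 * X 6) + X 6 * (X 2 * X 3) := by ring
    rw [e]; exact add_mem (Ideal.mul_mem_left _ _ h12) (Ideal.mul_mem_left _ _ h3)
  have l16 : IsLeadMonomial (X 0 ^ 2 * X 3 : MvPolynomial (Fin 7) K)
      (Finsupp.single 0 2 + Finsupp.single 3 1) := by
    have e : (X 0 ^ 2 * X 3 : MvPolynomial (Fin 7) K)
        = monomial (Finsupp.single 0 2 + Finsupp.single 3 1) 1 := by
      simp [X, monomial_pow, monomial_mul, Finsupp.smul_single]
    rw [e]; exact isLead_monomial _ 1 one_ne_zero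
  have m17 : (X 0 ^ 2 * X 5 : MvPolynomial (Fin 7) K) ∈ I7 K := by
    have e : (X 0 ^ 2 * X 5 : MvPolynomial (Fin 7) K)
        = X 5 * (X 0 ^ 2 - X 2 * X 6) + X 2 * (X 5 * X 6) := by ring
    rw [e]; exact add_mem (Ideal.mul_mem_left _ _ h12) (Ideal.mul_mem_left _ _ h6)
  have l17 : IsLeadMonomial (X 0 ^ 2 * X 5 : MvPolynomial (Fin 7) K)
      (Finsupp.single 0 2 + Finsupp.single 5 1) := by
    have e : (X 0 ^ 2 * X 5 : MvPolynomial (Fin 7) K)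
        = monomial (Finsupp.single 0 2 + Finsupp.single 5 1) 1 := by
      simp [X, monomial_pow, monomial_mul, Finsupp.smul_single]
    rw [e]; exact isLead_monomial _ 1 one_ne_zero
  have m18 : (X 0 ^ 2 * X 2 - X 1 * X 4 * X 6 : MvPolynomial (Fin 7) K) ∈ I7 K := by
    have e : (X 0 ^ 2 * X 2 - X 1 * X 4 * X 6 : MvPolynomial (Fin 7) K)
        = X 2 * (X 0 ^ 2 - X 2 * X 6) + X 6 * (X 2 ^ 2 - X 1 * X 4) := by ring
    rw [e]; exact add_mem (Ideal.mul_mem_left _ _ h12) (Ideal.mul_mem_left _ _ h9)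
  have l18 : IsLeadMonomial (X 0 ^ 2 * X 2 - X 1 * X 4 * X 6 : MvPolynomial (Fin 7) K)
      (Finsupp.single 1 1 + Finsupp.single 4 1 + Finsupp.single 6 1) := by
    have e1 : (X 0 ^ 2 * X 2 : MvPolynomial (Fin 7) K)
        = monomial (Finsupp.single 0 2 + Finsupp.single 2 1) 1 := by
      simp [X, monomial_pow, monomial_mul, Finsupp.smul_single]
    have e2' : (X 1 * X 4 * X 6 : MvPolynomial (Fin 7) K)
        = monomial (Finsupp.single 1 1 + Finsupp.single 4 1 + Finsupp.single 6 1) 1 := by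
      simp [X, monomial_mul]
    rw [e1, e2']; exact isLead_sub₂ L8
  constructor
  · intro m hm
    simp only [Set.mem_insert_iff, Set.mem_singleton_iff] at hm
    rcases hm with rfl|rfl|rfl|rfl|rfl|rfl|rfl|rfl|rfl|rfl|rfl|rfl|rfl|rfl|rfl|rfl|rfl|rfl
    · exact mem_init h1 l1
    · exact mem_init h2 l2
    · exact mem_init h3 l3
    · exact mem_init h4 l4
    · exact mem_init h5 l5
    · exact mem_init h6 l6
    · exact mem_init h7 l7
    · exact mem_init h8 l8
    · exact mem_init h9 l9
    · exact mem_init h10 l10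
    · exact mem_init h11 l11
    · exact mem_init h13 l13
    · exact mem_init h14 l14
    · exact mem_init m14 l14'
    · exact mem_init h12 l12
    · exact mem_init m16 l16
    · exact mem_init m17 l17
    · exact mem_init m18 l18
  · intro m hm
    simp only [Set.mem_insert_iff, Set.mem_singleton_iff] at hm
    rcases hm with rfl|rfl|rfl|rfl|rfl
    · exact ⟨_, m14, isLead_ne_zero l14', l14'⟩
    · exact ⟨_, h12, isLead_ne_zero l12, l12⟩
    · exact ⟨_, m16, isLead_ne_zero l16, l16⟩
    · exact ⟨_, m17, isLead_ne_zero l17, l17⟩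
    · exact ⟨_, m18, isLead_ne_zero l18, l18⟩
end
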